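/- Let R = S[x] be a polynomial ring over a commutative ℚ-algebra S (x one variable), k ≥ 0, and let h, g_0, …, g_p ∈ R with p ≥ k. Suppose h·∂^k-coefficient relations hold: g_i = 0 for i > k, h = (−1)^k·x·g_k, and x·g_i + (i+1)·g_{i+1} = 0 for 0 ≤ i ≤ k−1. Then there exists u ∈ R with h = u·x^{k+1}; explicitly g_k = ((−1)^k/k!)·x^k·g_0 and h = (1/k!)·x^{k+1}·g_0. -/
import Mathlib


open Polynomial

/-- Let `R = S[x]` be a polynomial ring over a commutative `ℚ`-algebra `S`, `k ≥ 0`, and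
`h, g_0, …, g_p ∈ R` with `p ≥ k`. Suppose `g_i = 0` for `i > k`, `h = (−1)^k·x·g_k`,
and `x·g_i + (i+1)·g_{i+1} = 0` for `0 ≤ i ≤ k−1`. Then `h` is a multiple of `x^{k+1}`;
explicitly `g_k = ((−1)^k/k!)·x^k·g_0` and `h = (1/k!)·x^{k+1}·g_0`. -/
theorem stmt_17 (S : Type*) [CommRing S] [Algebra ℚ S] (k p : ℕ) (hp : k ≤ p)
    (h : Polynomial S) (g : ℕ → Polynomial S)
    (hzero : ∀ i, k < i → g i = 0)
    (hrec : ∀ i < k, X * g i + ((i : Polynomial S) + 1) * g (i + 1) = 0)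
    (hh : h = (-1) ^ k * X * g k) :
    (∃ u : Polynomial S, h = u * X ^ (k + 1)) ∧
      g k = ((-1 : ℚ) ^ k / k.factorial) • (X ^ k * g 0) ∧
      h = ((k.factorial : ℚ)⁻¹) • (X ^ (k + 1) * g 0) := by
  have key : ∀ i ≤ k, g i = ((-1 : ℚ) ^ i / i.factorial) • (X ^ i * g 0) := by
    intro i hi
    induction i with
    | zero => simp
    | succ n ih =>
      have hn : n < k := Nat.lt_of_succ_le hi
      have hr := hrec n hn
      have ihn := ih (le_of_lt hn)
      have hcast : ((n : Polynomial S) + 1) * g (n + 1) = ((n : ℚ) + 1) • g (n + 1) := by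
        have : ((n : ℚ) + 1) • g (n + 1) = ((n + 1 : ℕ) : ℚ) • g (n + 1) := by push_cast; ring_nf
        rw [this, Nat.cast_smul_eq_nsmul, nsmul_eq_mul]
        push_cast
        ring
      rw [hcast, ihn] at hr
      have hne : ((n : ℚ) + 1) ≠ 0 := by positivity
      have : g (n + 1) = (((n : ℚ) + 1)⁻¹ * (-((-1 : ℚ) ^ n / n.factorial))) •
          (X ^ (n + 1) * g 0) := by
        have h2 : ((n : ℚ) + 1) • g (n + 1) = (-((-1 : ℚ) ^ n / n.factorial)) •
            (X ^ (n + 1) * g 0) := by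
          have := hr
          rw [mul_smul_comm] at this
          have h3 : X * (X ^ n * g 0) = X ^ (n + 1) * g 0 := by ring
          rw [h3] at this
          linear_combination (norm := module) this
        rw [mul_smul, ← h2, smul_smul, inv_mul_cancel₀ hne, one_smul]
      rw [this]
      congr 1
      rw [Nat.factorial_succ]
      push_cast
      field_simp
      ring
  have hk := key k le_rfl
  have hfne : ((k.factorial : ℚ)) ≠ 0 := by
    exact_mod_cast Nat.factorial_ne_zero k
  have hneg : ((-1 : Polynomial S) ^ k) = ((-1 : ℚ) ^ k) • (1 : Polynomial S) := by
    rcases Nat.even_or_odd k with he | ho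
    · rw [he.neg_one_pow, Even.neg_one_pow he]; simp
    · rw [ho.neg_one_pow, Odd.neg_one_pow ho]; simp [Algebra.smul_def]
  have hmain : h = ((k.factorial : ℚ)⁻¹) • (X ^ (k + 1) * g 0) := by
    rw [hh, hk, mul_smul_comm, hneg, smul_mul_assoc, smul_mul_assoc,
      one_mul, smul_smul]
    have : X * (X ^ k * g 0) = X ^ (k + 1) * g 0 := by ring
    rw [this]
    congr 1
    rw [div_mul_eq_mul_div, ← pow_add]
    simp [Even.neg_one_pow (Even.add_self k), one_div]
  refine ⟨⟨((k.factorial : ℚ)⁻¹) • g 0, ?_⟩, hk, hmain⟩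
  rw [hmain, smul_mul_assoc]
  ring_nf
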